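/- Let m2 ≠ 0 be real, σ > 0, β real with σ^2 > 4β^2 and β ≠ 0. Define on the interval where L(t) = σ e^{2 m2 t} - β^2 e^{4 m2 t} - 1 > 0: a(t) = sqrt(L(t)), b(t) = β e^{2 m2 t}, c(t) = a(t) - a'(t)/m2. Then (i) a*c - b^2 = -1, (ii) a' - m2 (a - c) = 0, and (iii) b' - 2 m2 b = 0. -/

import Mathlib

/-! Everything is explicit in `E = exp (2 m₂ t)`: `a² = L = σ E - β² E² - 1`,
`b = β E`, and differentiating `a² = L` gives `a a' = m₂ (σ E - 2 β² E²)`. Hence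
`a c = a² - a a' / m₂ = β² E² - 1 = b² - 1`, while `a' = m₂ (a - c)` is the definition of `c`
and `b' = 2 m₂ b` is the derivative of an exponential. -/

open Real

lemma hasDerivAt_exp_const_mul (k t : ℝ) :
    HasDerivAt (fun s => exp (k * s)) (k * exp (k * t)) t := by
  simpa [mul_comm] using ((hasDerivAt_id t).const_mul k).exp

lemma sqrt_mul_deriv_sqrt {f : ℝ → ℝ} {f' t : ℝ} (hf : HasDerivAt f f' t) (hpos : 0 < f t) :
    √(f t) * deriv (fun s => √(f s)) t = f' / 2 := by
  rw [(hf.sqrt hpos.ne').deriv]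
  have := Real.sqrt_pos.2 hpos
  field_simp

lemma hasDerivAt_exp_quadratic (σ β m t : ℝ) :
    HasDerivAt (fun s => σ * exp (2 * m * s) - β ^ 2 * exp (4 * m * s) - 1)
      (2 * m * (σ * exp (2 * m * t) - 2 * β ^ 2 * exp (4 * m * t))) t := by
  have := (((hasDerivAt_exp_const_mul (2 * m) t).const_mul σ).sub
    ((hasDerivAt_exp_const_mul (4 * m) t).const_mul (β ^ 2))).sub_const 1
  exact this.congr_deriv (by ring)

lemma exp_two_mul_sq (m t : ℝ) : exp (2 * m * t) ^ 2 = exp (4 * m * t) := by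
  rw [← exp_nat_mul]
  ring_nf

theorem stmt_11_general (m2 σ β : ℝ) (hm2 : m2 ≠ 0)
    (L a b c : ℝ → ℝ)
    (hL : ∀ t, L t = σ * Real.exp (2 * m2 * t) - β ^ 2 * Real.exp (4 * m2 * t) - 1)
    (ha : ∀ t, a t = Real.sqrt (L t))
    (hb : ∀ t, b t = β * Real.exp (2 * m2 * t))
    (hc : ∀ t, c t = a t - deriv a t / m2) :
    ∀ t, L t > 0 →
      a t * c t - (b t) ^ 2 = -1 ∧
      deriv a t - m2 * (a t - c t) = 0 ∧
      deriv b t - 2 * m2 * b t = 0 := by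
  intro t hLt
  have hLd : HasDerivAt L (2 * m2 * (σ * exp (2 * m2 * t) - 2 * β ^ 2 * exp (4 * m2 * t))) t := by
    rw [funext hL]
    exact hasDerivAt_exp_quadratic σ β m2 t
  have ha' : a t * deriv a t = m2 * (σ * exp (2 * m2 * t) - 2 * β ^ 2 * exp (4 * m2 * t)) := by
    rw [funext ha, sqrt_mul_deriv_sqrt hLd hLt]
    ring
  have hb' : deriv b t = 2 * m2 * b t := by
    rw [funext hb, ((hasDerivAt_exp_const_mul (2 * m2) t).const_mul β).deriv]
    ring
  refine ⟨?_, ?_, by rw [hb', sub_self]⟩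
  · rw [hc, mul_sub, mul_div_assoc', ha', ha, mul_self_sqrt hLt.le, hL, hb, mul_pow,
      exp_two_mul_sq]
    field_simp
    ring
  · rw [hc]
    field_simp
    ring

theorem stmt_11 (m2 σ β : ℝ) (hm2 : m2 ≠ 0) (hσ : 0 < σ)
    (hdisc : σ ^ 2 > 4 * β ^ 2) (hβ : β ≠ 0)
    (L a b c : ℝ → ℝ)
    (hL : ∀ t, L t = σ * Real.exp (2 * m2 * t) - β ^ 2 * Real.exp (4 * m2 * t) - 1)
    (ha : ∀ t, a t = Real.sqrt (L t))
    (hb : ∀ t, b t = β * Real.exp (2 * m2 * t))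
    (hc : ∀ t, c t = a t - deriv a t / m2) :
    ∀ t, L t > 0 →
      a t * c t - (b t) ^ 2 = -1 ∧
      deriv a t - m2 * (a t - c t) = 0 ∧
      deriv b t - 2 * m2 * b t = 0 :=
  stmt_11_general m2 σ β hm2 L a b c hL ha hb hc
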